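/- arXiv:math-ph/0702100 — 6 statements merged into one kernel-verified Lean document; each statement's English description precedes it below -/
import Mathlib

section
/- Let f : [-π,π] → ℂ be C² with f(-π)=f(π) and f'(-π)=f'(π), and let Lf(θ) = -ε (sin θ · f'(θ))' - f'(θ). Then Re (f', Lf) = -∫_{-π}^{π} (1 + (ε/2) cos θ) |f'(θ)|² dθ. -/
/-!
Write `g = f'`. Since `(sin · g)' = cos · g + sin · g'` and `(‖g‖²)' = 2 ⟪g, g'⟫`, the real part of
`conj g · (-ε (sin · g)' - g)` equals `-(1 + (ε/2) cos) ‖g‖² - (ε/2) (sin · ‖g‖²)'`, and the exact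
derivative integrates to zero over `[-π, π]` because `sin` vanishes at `±π`.
-/

open Real intervalIntegral

theorem re_conj_mul_neg_mul_cos_add_sin_sub (ε c s : ℝ) (z w : ℂ) :
    ((starRingEnd ℂ) z * (-(ε : ℂ) * (c * z + s * w) - z)).re
      = -((1 + ε / 2 * c) * ‖z‖ ^ 2) - ε / 2 * (c * ‖z‖ ^ 2 + s * (2 * inner ℝ z w)) := by
  simp [Complex.mul_re, Complex.inner, Complex.sq_norm, Complex.normSq_apply]
  ring

theorem integral_cos_mul_add_sin_mul_deriv_eq_zero {N N' : ℝ → ℝ}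
    (hN : ∀ x ∈ Set.uIcc (-π) π, HasDerivAt N (N' x) x)
    (hN' : IntervalIntegrable N' MeasureTheory.volume (-π) π) :
    ∫ x in (-π)..π, cos x * N x + sin x * N' x = 0 := by
  rw [integral_deriv_mul_eq_sub (fun x _ => hasDerivAt_sin x) hN
    (continuous_cos.intervalIntegrable _ _) hN']
  simp

theorem re_integral_conj_mul_neg_deriv_sin_mul_sub (ε : ℝ) {g : ℝ → ℂ} (hg : ContDiff ℝ 1 g) :
    (∫ θ in (-π)..π, (starRingEnd ℂ) (g θ) *
        (-(ε : ℂ) * deriv (fun t => (sin t : ℂ) * g t) θ - g θ)).re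
      = -∫ θ in (-π)..π, (1 + ε / 2 * cos θ) * ‖g θ‖ ^ 2 := by
  have hg' : ∀ θ, HasDerivAt g (deriv g θ) θ :=
    fun θ => (hg.differentiable one_ne_zero θ).hasDerivAt
  have hcont : Continuous g := hg.continuous
  have hcont' : Continuous (deriv g) := hg.continuous_deriv le_rfl
  have hderiv_sin_mul : ∀ θ, deriv (fun t => (sin t : ℂ) * g t) θ
      = cos θ * g θ + sin θ * deriv g θ :=
    fun θ => ((hasDerivAt_sin θ).ofReal_comp.mul (hg' θ)).deriv
  have hderiv_norm_sq : ∀ θ, HasDerivAt (‖g ·‖ ^ 2) (2 * inner ℝ (g θ) (deriv g θ)) θ :=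
    fun θ => (hg' θ).norm_sq
  calc _ = ∫ θ in (-π)..π, ((starRingEnd ℂ) (g θ) *
          (-(ε : ℂ) * deriv (fun t => (sin t : ℂ) * g t) θ - g θ)).re := by
        refine (intervalIntegral_re (𝕜 := ℂ) ?_).symm
        simp only [hderiv_sin_mul]
        exact Continuous.intervalIntegrable (by fun_prop) _ _
    _ = ∫ θ in (-π)..π, (-((1 + ε / 2 * cos θ) * ‖g θ‖ ^ 2)
          - ε / 2 * (cos θ * ‖g θ‖ ^ 2 + sin θ * (2 * inner ℝ (g θ) (deriv g θ)))) := by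
        simp only [hderiv_sin_mul, re_conj_mul_neg_mul_cos_add_sin_sub]
    _ = _ := by
        rw [integral_sub, integral_neg, integral_const_mul,
          integral_cos_mul_add_sin_mul_deriv_eq_zero (fun θ _ => hderiv_norm_sq θ)
            (Continuous.intervalIntegrable (by fun_prop) _ _), mul_zero, sub_zero]
        all_goals exact Continuous.intervalIntegrable (by fun_prop) _ _

theorem re_inner_deriv_L_general (ε : ℝ) (f : ℝ → ℂ)
    (hf : ContDiff ℝ 2 f) :
    (∫ θ in (-π)..π, (starRingEnd ℂ) (deriv f θ) *
        (-(ε : ℂ) * deriv (fun t => (Real.sin t : ℂ) * deriv f t) θ - deriv f θ)).re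
      = -∫ θ in (-π)..π, (1 + ε / 2 * Real.cos θ) * ‖deriv f θ‖ ^ 2 :=
  re_integral_conj_mul_neg_deriv_sin_mul_sub ε (hf.deriv' (n := 1))

/-- For `f : [-π,π] → ℂ` of class `C²` with periodic boundary conditions and
`Lf = -ε (sin θ · f')' - f'`, one has
`Re (f', Lf) = -∫ (1 + (ε/2) cos θ) |f'(θ)|² dθ`. -/
theorem re_inner_deriv_L (ε : ℝ) (f : ℝ → ℂ)
    (hf : ContDiff ℝ 2 f)
    (hper : f (-π) = f π) (hper' : deriv f (-π) = deriv f π) :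
    (∫ θ in (-π)..π, (starRingEnd ℂ) (deriv f θ) *
        (-(ε : ℂ) * deriv (fun t => (Real.sin t : ℂ) * deriv f t) θ - deriv f θ)).re
      = -∫ θ in (-π)..π, (1 + ε / 2 * Real.cos θ) * ‖deriv f θ‖ ^ 2 :=
  re_inner_deriv_L_general ε f hf
end

section
/- Let |ε| < 2 and let f : [-π,π] → ℂ be C² with periodic boundary conditions f(-π)=f(π), f'(-π)=f'(π). Then for Lf = -ε(sin θ f')' - f' and any real λ₀, one has ‖(L - λ₀)f‖_{L²} ≥ (1 - |ε|/2) ‖f'‖_{L²}. -/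
/-!
Pair `(L - λ₀) f` with `f'` in `L²`, for functions valued in a real inner product space
(`ℂ` with `⟪z, w⟫ = Re (conj z * w)`). The `λ₀` term vanishes because `2 ⟪f, f'⟫ = (‖f‖²)'` and
`f` is periodic; the `-f'` term gives `-‖f'‖²`; and since `sin` vanishes at `±π`, integrating
`(sin θ ‖f'‖²)'` shows `∫ ⟪(sin θ f')', f'⟫ = ½ ∫ cos θ ‖f'‖²`, which is at most `½ ‖f'‖²` in
absolute value. Hence `-∫ ⟪(L - λ₀) f, f'⟫ ≥ c ‖f'‖²` with `c = 1 - |ε|/2`, and expanding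
`0 ≤ ‖(L - λ₀) f + c f'‖²` gives `‖(L - λ₀) f‖² ≥ c² ‖f'‖²`.
-/

open Real intervalIntegral
open scoped RealInnerProductSpace
variable {E : Type*} [NormedAddCommGroup E] [InnerProductSpace ℝ E]

theorem integral_inner_self_deriv_eq_zero {u : ℝ → E} {a b : ℝ} (hu : ContDiff ℝ 1 u)
    (hper : u a = u b) : ∫ θ in a..b, ⟪u θ, deriv u θ⟫ = 0 := by
  have hderiv : ∀ θ, HasDerivAt (‖u ·‖ ^ 2) (2 * ⟪u θ, deriv u θ⟫) θ :=
    fun θ => ((hu.differentiable one_ne_zero) θ).hasDerivAt.norm_sq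
  have hcont : Continuous fun θ => ⟪u θ, deriv u θ⟫ :=
    hu.continuous.inner (hu.continuous_deriv le_rfl)
  have h := integral_eq_sub_of_hasDerivAt (fun θ _ => hderiv θ)
    ((continuous_const.mul hcont).intervalIntegrable a b)
  rw [integral_const_mul, hper, sub_self] at h
  simpa using h

theorem integral_sin_mul_inner_self_deriv {u : ℝ → E} (hu : ContDiff ℝ 1 u) :
    ∫ θ in (-π)..π, sin θ * ⟪u θ, deriv u θ⟫ = -(∫ θ in (-π)..π, cos θ * ‖u θ‖ ^ 2) / 2 := by
  have hderiv : ∀ θ, HasDerivAt (fun t => sin t * ‖u t‖ ^ 2)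
      (cos θ * ‖u θ‖ ^ 2 + 2 * (sin θ * ⟪u θ, deriv u θ⟫)) θ := fun θ =>
    ((hasDerivAt_sin θ).mul ((hu.differentiable one_ne_zero) θ).hasDerivAt.norm_sq).congr_deriv
      (by ring)
  have hcos : Continuous fun θ => cos θ * ‖u θ‖ ^ 2 := by fun_prop
  have hsin : Continuous fun θ => 2 * (sin θ * ⟪u θ, deriv u θ⟫) :=
    continuous_const.mul (continuous_sin.mul (hu.continuous.inner (hu.continuous_deriv le_rfl)))
  have h := integral_eq_sub_of_hasDerivAt (fun θ _ => hderiv θ)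
    ((hcos.add hsin).intervalIntegrable (-π) π)
  rw [integral_add (hcos.intervalIntegrable _ _) (hsin.intervalIntegrable _ _),
    integral_const_mul, sin_neg, sin_pi] at h
  linarith

theorem integral_inner_deriv_sin_smul_self {u : ℝ → E} (hu : ContDiff ℝ 1 u) :
    ∫ θ in (-π)..π, ⟪deriv (fun t => sin t • u t) θ, u θ⟫
      = (∫ θ in (-π)..π, cos θ * ‖u θ‖ ^ 2) / 2 := by
  have hderiv : ∀ θ, deriv (fun t => sin t • u t) θ = sin θ • deriv u θ + cos θ • u θ :=
    fun θ => ((hasDerivAt_sin θ).smul ((hu.differentiable one_ne_zero) θ).hasDerivAt).deriv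
  have hcos : Continuous fun θ => cos θ * ‖u θ‖ ^ 2 := by fun_prop
  have hsin : Continuous fun θ => sin θ * ⟪u θ, deriv u θ⟫ :=
    continuous_sin.mul (hu.continuous.inner (hu.continuous_deriv le_rfl))
  simp_rw [hderiv, inner_add_left, real_inner_smul_left, real_inner_self_eq_norm_sq,
    real_inner_comm (u _)]
  rw [integral_add (hsin.intervalIntegrable _ _) (hcos.intervalIntegrable _ _),
    integral_sin_mul_inner_self_deriv hu]
  ring

theorem abs_integral_cos_mul_le {g : ℝ → ℝ} {a b : ℝ} (hab : a ≤ b)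
    (hg : IntervalIntegrable g MeasureTheory.volume a b) (hg₀ : 0 ≤ g) :
    |∫ θ in a..b, cos θ * g θ| ≤ ∫ θ in a..b, g θ :=
  norm_integral_le_of_norm_le (f := fun θ => cos θ * g θ) hab (.of_forall fun θ _ => by
    rw [norm_mul, norm_of_nonneg (hg₀ θ)]
    exact mul_le_of_le_one_left (hg₀ θ) (abs_cos_le_one θ)) hg

theorem mul_sqrt_integral_norm_sq_le_of_inner {F D : ℝ → E} {a b c : ℝ} (hab : a ≤ b)
    (hF : Continuous F) (hD : Continuous D)
    (h : c * ∫ θ in a..b, ‖D θ‖ ^ 2 ≤ -∫ θ in a..b, ⟪F θ, D θ⟫) :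
    c * √(∫ θ in a..b, ‖D θ‖ ^ 2) ≤ √(∫ θ in a..b, ‖F θ‖ ^ 2) := by
  rcases le_or_gt c 0 with hc | hc
  · exact (mul_nonpos_of_nonpos_of_nonneg hc (sqrt_nonneg _)).trans (sqrt_nonneg _)
  have hii {g : ℝ → ℝ} (hg : Continuous g) : IntervalIntegrable g MeasureTheory.volume a b :=
    hg.intervalIntegrable a b
  have hexpand : ∫ θ in a..b, ‖F θ + c • D θ‖ ^ 2 = (∫ θ in a..b, ‖F θ‖ ^ 2)
      + 2 * c * (∫ θ in a..b, ⟪F θ, D θ⟫) + c ^ 2 * ∫ θ in a..b, ‖D θ‖ ^ 2 := by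
    simp_rw [norm_add_sq_real, real_inner_smul_right, norm_smul, mul_pow, norm_eq_abs, sq_abs,
      ← mul_assoc]
    rw [integral_add (hii (by fun_prop)) (hii (by fun_prop)),
      integral_add (hii (by fun_prop)) (hii (by fun_prop)), integral_const_mul, integral_const_mul]
  have hnonneg : 0 ≤ ∫ θ in a..b, ‖F θ + c • D θ‖ ^ 2 :=
    integral_nonneg hab fun θ _ => sq_nonneg _
  rw [← sqrt_sq hc.le, ← sqrt_mul (sq_nonneg c)]
  exact sqrt_le_sqrt (by nlinarith)

/-- The operator `L` of the paper. -/
noncomputable def sinDiffusionOp (ε : ℝ) (u : ℝ → E) (θ : ℝ) : E :=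
  -ε • deriv (fun t => sin t • deriv u t) θ - deriv u θ

theorem continuous_sinDiffusionOp (ε : ℝ) {u : ℝ → E} (hu : ContDiff ℝ 2 u) :
    Continuous (sinDiffusionOp ε u) :=
  (((contDiff_sin.smul (hu.deriv' (n := 1))).continuous_deriv le_rfl).const_smul _).sub
    (hu.continuous_deriv one_le_two)

theorem integral_inner_sinDiffusionOp_sub_smul_deriv (ε lam₀ : ℝ) {u : ℝ → E}
    (hu : ContDiff ℝ 2 u) (hper : u (-π) = u π) :
    ∫ θ in (-π)..π, ⟪sinDiffusionOp ε u θ - lam₀ • u θ, deriv u θ⟫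
      = -(ε * (∫ θ in (-π)..π, cos θ * ‖deriv u θ‖ ^ 2) / 2) - ∫ θ in (-π)..π, ‖deriv u θ‖ ^ 2 := by
  have hu' : ContDiff ℝ 1 (deriv u) := hu.deriv'
  have hii {g : ℝ → ℝ} (hg : Continuous g) : IntervalIntegrable g MeasureTheory.volume (-π) π :=
    hg.intervalIntegrable _ _
  have hX : Continuous fun θ => ⟪deriv (fun t => sin t • deriv u t) θ, deriv u θ⟫ :=
    ((contDiff_sin.smul hu').continuous_deriv le_rfl).inner hu'.continuous
  have hU : Continuous fun θ => ⟪u θ, deriv u θ⟫ := hu.continuous.inner hu'.continuous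
  have hD : Continuous fun θ => ‖deriv u θ‖ ^ 2 := hu'.continuous.norm.pow 2
  simp_rw [sinDiffusionOp, inner_sub_left, real_inner_smul_left, real_inner_self_eq_norm_sq]
  rw [integral_sub (hii (by fun_prop)) (hii (by fun_prop)),
    integral_sub (hii (by fun_prop)) (hii hD), integral_const_mul, integral_const_mul,
    integral_inner_deriv_sin_smul_self hu', integral_inner_self_deriv_eq_zero (hu.of_le one_le_two) hper]
  ring

theorem mul_sqrt_integral_norm_sq_deriv_le (ε lam₀ : ℝ) {u : ℝ → E} (hu : ContDiff ℝ 2 u)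
    (hper : u (-π) = u π) :
    (1 - |ε| / 2) * √(∫ θ in (-π)..π, ‖deriv u θ‖ ^ 2)
      ≤ √(∫ θ in (-π)..π, ‖sinDiffusionOp ε u θ - lam₀ • u θ‖ ^ 2) := by
  have hD : Continuous fun θ => ‖deriv u θ‖ ^ 2 := (hu.continuous_deriv one_le_two).norm.pow 2
  refine mul_sqrt_integral_norm_sq_le_of_inner (neg_le_self pi_pos.le)
    ((continuous_sinDiffusionOp ε hu).sub (hu.continuous.const_smul lam₀))
    (hu.continuous_deriv one_le_two) ?_
  rw [integral_inner_sinDiffusionOp_sub_smul_deriv ε lam₀ hu hper]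
  set K := ∫ θ in (-π)..π, cos θ * ‖deriv u θ‖ ^ 2
  have hεK : |ε * K| ≤ |ε| * ∫ θ in (-π)..π, ‖deriv u θ‖ ^ 2 := by
    rw [abs_mul]
    exact mul_le_mul_of_nonneg_left (abs_integral_cos_mul_le (neg_le_self pi_pos.le)
      (hD.intervalIntegrable _ _) fun θ => sq_nonneg ‖deriv u θ‖) (abs_nonneg ε)
  linarith [neg_abs_le (ε * K)]

theorem resolvent_lower_bound_general (ε : ℝ) (f : ℝ → ℂ)
    (hf : ContDiff ℝ 2 f)
    (hper : f (-π) = f π) (lam₀ : ℝ) :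
    Real.sqrt (∫ θ in (-π)..π,
        ‖(-(ε : ℂ) * deriv (fun t => (Real.sin t : ℂ) * deriv f t) θ - deriv f θ)
          - (lam₀ : ℂ) * f θ‖ ^ 2)
      ≥ (1 - |ε| / 2) * Real.sqrt (∫ θ in (-π)..π, ‖deriv f θ‖ ^ 2) := by
  have h := mul_sqrt_integral_norm_sq_deriv_le ε lam₀ hf hper
  simpa [sinDiffusionOp, Complex.real_smul] using h

/-- For `|ε| < 2`, `f : [-π,π] → ℂ` of class `C²` with periodic boundary
conditions, `Lf = -ε(sin θ f')' - f'`, and any real `λ₀`: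
`‖(L - λ₀)f‖_{L²} ≥ (1 - |ε|/2) ‖f'‖_{L²}`. -/
theorem resolvent_lower_bound (ε : ℝ) (hε : |ε| < 2) (f : ℝ → ℂ)
    (hf : ContDiff ℝ 2 f)
    (hper : f (-π) = f π) (hper' : deriv f (-π) = deriv f π) (lam₀ : ℝ) :
    Real.sqrt (∫ θ in (-π)..π,
        ‖(-(ε : ℂ) * deriv (fun t => (Real.sin t : ℂ) * deriv f t) θ - deriv f θ)
          - (lam₀ : ℂ) * f θ‖ ^ 2)
      ≥ (1 - |ε| / 2) * Real.sqrt (∫ θ in (-π)..π, ‖deriv f θ‖ ^ 2) :=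
  resolvent_lower_bound_general ε f hf hper lam₀
end

section
/- Suppose f : [-π,π] → ℂ is C² with periodic boundary conditions f(-π)=f(π), f'(-π)=f'(π), f is not identically zero, and f satisfies -ε(sin θ f')' - f' = λ f for some λ ∈ ℂ and ε ∈ ℝ. Then Re λ · ∫|f|² = ε ∫_{-π}^{π} sin θ |f'(θ)|² dθ and i Im λ · ∫|f|² = -∫_{-π}^{π} conj(f) f' dθ. -/
/-!
Pair the eigenvalue equation with `conj f` and integrate over `[-π, π]`. Integrating by parts
moves the outer derivative off the flux `sin θ · f'`, with no boundary term because `sin` vanishes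
at `±π`; this gives `λ ∫|f|² = ε ∫ sin θ |f'|² - ∫ conj f · f'`. The last integral is purely
imaginary, since its real part is `½ ∫ (|f|²)'`, which vanishes by periodicity of `f`. Taking real
and imaginary parts yields the two formulas.
-/

open Real intervalIntegral ComplexConjugate

section

variable {a b : ℝ}

theorem integral_conj_mul_ofReal_mul (w : ℝ → ℝ) (g : ℝ → ℂ) :
    ∫ x in a..b, conj (g x) * ((w x : ℂ) * g x) = ((∫ x in a..b, w x * ‖g x‖ ^ 2 : ℝ) : ℂ) := by
  rw [← integral_ofReal]
  refine integral_congr fun x _ => ?_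
  rw [mul_left_comm, Complex.conj_mul']
  push_cast
  rfl

theorem integral_conj_mul_self (f : ℝ → ℂ) :
    ∫ x in a..b, conj (f x) * f x = ((∫ x in a..b, ‖f x‖ ^ 2 : ℝ) : ℂ) := by
  rw [← integral_ofReal]
  simp_rw [Complex.conj_mul']
  push_cast
  rfl

theorem integral_conj_mul_deriv_eq_neg_of_eq_zero {f v : ℝ → ℂ} (hf : ContDiff ℝ 1 f)
    (hv : ContDiff ℝ 1 v) (ha : v a = 0) (hb : v b = 0) :
    ∫ x in a..b, conj (f x) * deriv v x = -∫ x in a..b, conj (deriv f x) * v x := by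
  have hfd := hf.differentiable one_ne_zero
  have hvd := hv.differentiable one_ne_zero
  rw [integral_mul_deriv_eq_deriv_mul (u := fun x => conj (f x)) (u' := fun x => conj (deriv f x))
    (fun x _ => (hfd x).hasDerivAt.star)
    (fun x _ => (hvd x).hasDerivAt)
    ((Complex.continuous_conj.comp (hf.continuous_deriv le_rfl)).intervalIntegrable _ _)
    ((hv.continuous_deriv le_rfl).intervalIntegrable _ _), ha, hb]
  simp

theorem re_integral_conj_mul_deriv_eq_zero {f : ℝ → ℂ} (hf : ContDiff ℝ 1 f) (hab : f a = f b) :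
    (∫ x in a..b, conj (f x) * deriv f x).re = 0 := by
  have hfd := hf.differentiable one_ne_zero
  have hcont : Continuous fun x => conj (f x) * deriv f x :=
    (Complex.continuous_conj.comp hf.continuous).mul (hf.continuous_deriv le_rfl)
  have hprim : ∀ x, HasDerivAt (‖f ·‖ ^ 2) (2 * (conj (f x) * deriv f x).re) x := fun x => by
    simpa [Complex.inner, mul_comm] using (hfd x).hasDerivAt.norm_sq
  have hre : ∫ x in a..b, (conj (f x) * deriv f x).re = (∫ x in a..b, conj (f x) * deriv f x).re :=
    Complex.reCLM.intervalIntegral_comp_comm (hcont.intervalIntegrable _ _)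
  rw [← hre, ← mul_right_inj' two_ne_zero, mul_zero, ← integral_const_mul,
    integral_eq_sub_of_hasDerivAt (fun x _ => hprim x)
      ((continuous_const.mul (Complex.continuous_re.comp hcont)).intervalIntegrable _ _), hab,
    sub_self]

theorem integral_conj_mul_weighted_operator_eq (ε : ℝ) {w : ℝ → ℝ} {f : ℝ → ℂ}
    (hw : ContDiff ℝ 1 w) (hf : ContDiff ℝ 2 f) (ha : w a = 0) (hb : w b = 0) :
    ∫ x in a..b, conj (f x) * (-(ε : ℂ) * deriv (fun t => (w t : ℂ) * deriv f t) x - deriv f x)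
      = ε * ((∫ x in a..b, w x * ‖deriv f x‖ ^ 2 : ℝ) : ℂ)
        - ∫ x in a..b, conj (f x) * deriv f x := by
  have hf1 : ContDiff ℝ 1 f := hf.of_le one_le_two
  have hflux : ContDiff ℝ 1 fun t => (w t : ℂ) * deriv f t :=
    (Complex.ofRealCLM.contDiff.comp hw).mul hf.deriv'
  have hconj : Continuous fun x => conj (f x) := Complex.continuous_conj.comp hf.continuous
  simp_rw [mul_sub, mul_left_comm _ (-(ε : ℂ))]
  rw [integral_sub, integral_const_mul,
    integral_conj_mul_deriv_eq_neg_of_eq_zero hf1 hflux (by simp [ha]) (by simp [hb]),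
    integral_conj_mul_ofReal_mul, neg_mul_neg]
  · exact (continuous_const.mul (hconj.mul (hflux.continuous_deriv le_rfl))).intervalIntegrable _ _
  · exact (hconj.mul (hf.continuous_deriv one_le_two)).intervalIntegrable _ _

end

theorem Complex.re_mul_eq_and_I_mul_im_mul_eq_of_mul_ofReal_eq {z B : ℂ} {A r s : ℝ}
    (h : z * A = r * s - B) (hB : B.re = 0) :
    z.re * A = r * s ∧ I * z.im * A = -B := by
  have hre := congrArg re h
  have him := congrArg im h
  simp only [mul_re, mul_im, sub_re, sub_im, ofReal_re, ofReal_im, hB] at hre him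
  exact ⟨by linarith, ext (by simp [hB]) (by simp; linarith)⟩

theorem eigenvalue_re_im_formulas_general (ε : ℝ) (lam : ℂ) (f : ℝ → ℂ)
    (hf : ContDiff ℝ 2 f)
    (hper : f (-π) = f π)
    (heig : ∀ θ ∈ Set.Icc (-π) π,
      -(ε : ℂ) * deriv (fun t => (Real.sin t : ℂ) * deriv f t) θ - deriv f θ
        = lam * f θ) :
    lam.re * (∫ θ in (-π)..π, ‖f θ‖ ^ 2)
        = ε * ∫ θ in (-π)..π, Real.sin θ * ‖deriv f θ‖ ^ 2
    ∧ Complex.I * (lam.im : ℂ) * ((∫ θ in (-π)..π, ‖f θ‖ ^ 2 : ℝ) : ℂ)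
        = -∫ θ in (-π)..π, (starRingEnd ℂ) (f θ) * deriv f θ := by
  refine Complex.re_mul_eq_and_I_mul_im_mul_eq_of_mul_ofReal_eq ?_
    (re_integral_conj_mul_deriv_eq_zero (hf.of_le one_le_two) hper)
  calc lam * ((∫ θ in (-π)..π, ‖f θ‖ ^ 2 : ℝ) : ℂ)
      = ∫ θ in (-π)..π, conj (f θ) * (lam * f θ) := by
        rw [← integral_conj_mul_self, ← integral_const_mul]
        exact integral_congr fun θ _ => by ring
    _ = ∫ θ in (-π)..π, conj (f θ) *
          (-(ε : ℂ) * deriv (fun t => (Real.sin t : ℂ) * deriv f t) θ - deriv f θ) :=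
        integral_congr fun θ hθ => by
          rw [heig θ (by rwa [Set.uIcc_of_le (neg_le_self pi_pos.le)] at hθ)]
    _ = _ := integral_conj_mul_weighted_operator_eq ε contDiff_sin hf (by simp) sin_pi

/-- For a `C²` periodic eigenfunction `f` of `Lf = -ε(sin θ f')' - f' = λ f`:
`Re λ · ∫|f|² = ε ∫ sin θ |f'|²` and `i Im λ · ∫|f|² = -∫ conj(f) f'`. -/
theorem eigenvalue_re_im_formulas (ε : ℝ) (lam : ℂ) (f : ℝ → ℂ)
    (hf : ContDiff ℝ 2 f)
    (hper : f (-π) = f π) (hper' : deriv f (-π) = deriv f π)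
    (hnz : ∃ θ ∈ Set.Icc (-π) π, f θ ≠ 0)
    (heig : ∀ θ ∈ Set.Icc (-π) π,
      -(ε : ℂ) * deriv (fun t => (Real.sin t : ℂ) * deriv f t) θ - deriv f θ
        = lam * f θ) :
    lam.re * (∫ θ in (-π)..π, ‖f θ‖ ^ 2)
        = ε * ∫ θ in (-π)..π, Real.sin θ * ‖deriv f θ‖ ^ 2
    ∧ Complex.I * (lam.im : ℂ) * ((∫ θ in (-π)..π, ‖f θ‖ ^ 2 : ℝ) : ℂ)
        = -∫ θ in (-π)..π, (starRingEnd ℂ) (f θ) * deriv f θ :=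
  eigenvalue_re_im_formulas_general ε lam f hf hper heig
end

section
/- Suppose |ε| < 2 and f : [-π,π] → ℂ is C², periodic (f and f' agree at ±π), satisfies -ε(sin θ f')' - f' = λ f, and f is not constant. Then Im λ ≠ 0. -/
open Real intervalIntegral

/-!
If `λ` is real, multiplying the equation by `conj f'` and taking real parts shows that
`Φ = λ/2 |f|² + ε/2 sin θ |f'|²` satisfies `Φ' = -(1 + ε/2 cos θ) |f'|²`. Periodicity of `f` and
`sin (±π) = 0` give `Φ(π) = Φ(-π)`, so the integral of `(1 + ε/2 cos θ) |f'|²` over `[-π, π]`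
vanishes. The weight is positive for `|ε| < 2`, hence `f' = 0` and `f` is constant.
-/

lemma one_add_half_mul_cos_pos {ε : ℝ} (hε : |ε| < 2) (θ : ℝ) : 0 < 1 + ε / 2 * cos θ := by
  have : |ε / 2 * cos θ| < 1 := by
    rw [abs_mul, abs_div, abs_two]
    calc |ε| / 2 * |cos θ| ≤ |ε| / 2 := mul_le_of_le_one_right (by positivity) (abs_cos_le_one θ)
      _ < 1 := by linarith
  linarith [neg_abs_le (ε / 2 * cos θ)]

lemma hasDerivAt_energy {ε lam θ : ℝ} {f : ℝ → ℂ} (hf : DifferentiableAt ℝ f θ)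
    (hf' : DifferentiableAt ℝ (deriv f) θ)
    (heig : -(ε : ℂ) * deriv (fun t => (sin t : ℂ) * deriv f t) θ - deriv f θ = lam * f θ) :
    HasDerivAt (fun t => lam / 2 * ‖f t‖ ^ 2 + ε / 2 * (sin t * ‖deriv f t‖ ^ 2))
      (-((1 + ε / 2 * cos θ) * ‖deriv f θ‖ ^ 2)) θ := by
  have hprod : deriv (fun t => (sin t : ℂ) * deriv f t) θ
      = cos θ * deriv f θ + sin θ * deriv (deriv f) θ :=
    ((hasDerivAt_sin θ).ofReal_comp.mul hf'.hasDerivAt).deriv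
  rw [hprod] at heig
  have hre := congrArg Complex.re heig
  have him := congrArg Complex.im heig
  simp only [Complex.add_re, Complex.add_im, Complex.mul_re, Complex.mul_im, Complex.sub_re,
    Complex.sub_im, Complex.neg_re, Complex.neg_im, Complex.ofReal_re, Complex.ofReal_im]
    at hre him
  refine ((hf.hasDerivAt.norm_sq.const_mul (lam / 2)).add
    (((hasDerivAt_sin θ).mul hf'.hasDerivAt.norm_sq).const_mul (ε / 2))).congr_deriv ?_
  simp only [Complex.inner, Complex.sq_norm, Complex.normSq_apply, Complex.mul_re,
    Complex.conj_re, Complex.conj_im]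
  linear_combination -(deriv f θ).re * hre - (deriv f θ).im * him

lemma integral_weighted_norm_deriv_sq_eq_zero {ε lam : ℝ} {f : ℝ → ℂ} (hf : ContDiff ℝ 2 f)
    (hper : f (-π) = f π)
    (heig : ∀ θ ∈ Set.Icc (-π) π,
      -(ε : ℂ) * deriv (fun t => (sin t : ℂ) * deriv f t) θ - deriv f θ = lam * f θ) :
    ∫ θ in -π..π, (1 + ε / 2 * cos θ) * ‖deriv f θ‖ ^ 2 = 0 := by
  have hf' : ContDiff ℝ 1 (deriv f) := hf.deriv' (n := 1)
  have hderiv : ∀ θ ∈ Set.uIcc (-π) π, HasDerivAt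
      (fun t => lam / 2 * ‖f t‖ ^ 2 + ε / 2 * (sin t * ‖deriv f t‖ ^ 2))
      (-((1 + ε / 2 * cos θ) * ‖deriv f θ‖ ^ 2)) θ := fun θ hθ =>
    hasDerivAt_energy (hf.differentiable two_ne_zero θ) (hf'.differentiable one_ne_zero θ)
      (heig θ (by rwa [Set.uIcc_of_le (by linarith [pi_pos])] at hθ))
  have hcont : Continuous fun θ => -((1 + ε / 2 * cos θ) * ‖deriv f θ‖ ^ 2) := by fun_prop
  have hFTC := integral_eq_sub_of_hasDerivAt hderiv (hcont.intervalIntegrable _ _)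
  simpa [integral_neg, hper] using hFTC

lemma deriv_eq_zero_of_integral_weighted_norm_deriv_sq_eq_zero {ε : ℝ} (hε : |ε| < 2)
    {f : ℝ → ℂ} (hf' : Continuous (deriv f))
    (h : ∫ θ in -π..π, (1 + ε / 2 * cos θ) * ‖deriv f θ‖ ^ 2 = 0) :
    ∀ θ ∈ Set.Icc (-π) π, deriv f θ = 0 := by
  intro θ hθ
  by_contra hne
  refine (integral_pos (by linarith [pi_pos]) (by fun_prop) (fun t _ => ?_) ⟨θ, hθ, ?_⟩).ne' h
  · exact mul_nonneg (one_add_half_mul_cos_pos hε t).le (sq_nonneg _)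
  · exact mul_pos (one_add_half_mul_cos_pos hε θ) (by positivity)

theorem eigenvalue_im_ne_zero_general (ε : ℝ) (hε : |ε| < 2) (lam : ℂ) (f : ℝ → ℂ)
    (hf : ContDiff ℝ 2 f)
    (hper : f (-π) = f π)
    (heig : ∀ θ ∈ Set.Icc (-π) π,
      -(ε : ℂ) * deriv (fun t => (Real.sin t : ℂ) * deriv f t) θ - deriv f θ
        = lam * f θ)
    (hnc : ¬∃ c : ℂ, ∀ θ ∈ Set.Icc (-π) π, f θ = c) :
    lam.im ≠ 0 := by
  intro him
  have hlam : lam = (lam.re : ℂ) := Complex.ext rfl (by simp [him])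
  rw [hlam] at heig
  have hf'0 := deriv_eq_zero_of_integral_weighted_norm_deriv_sq_eq_zero hε
    (hf.continuous_deriv one_le_two) (integral_weighted_norm_deriv_sq_eq_zero hf hper heig)
  refine hnc ⟨f (-π), constant_of_has_deriv_right_zero hf.continuous.continuousOn
    fun θ hθ => ?_⟩
  rw [← hf'0 θ (Set.Ico_subset_Icc_self hθ)]
  exact (hf.differentiable two_ne_zero θ).hasDerivAt.hasDerivWithinAt

/-- For `|ε| < 2` and a non-constant `C²` periodic eigenfunction `f` of
`-ε(sin θ f')' - f' = λ f`, the eigenvalue satisfies `Im λ ≠ 0`. -/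
theorem eigenvalue_im_ne_zero (ε : ℝ) (hε : |ε| < 2) (lam : ℂ) (f : ℝ → ℂ)
    (hf : ContDiff ℝ 2 f)
    (hper : f (-π) = f π) (hper' : deriv f (-π) = deriv f π)
    (heig : ∀ θ ∈ Set.Icc (-π) π,
      -(ε : ℂ) * deriv (fun t => (Real.sin t : ℂ) * deriv f t) θ - deriv f θ
        = lam * f θ)
    (hnc : ¬∃ c : ℂ, ∀ θ ∈ Set.Icc (-π) π, f θ = c) :
    lam.im ≠ 0 :=
  eigenvalue_im_ne_zero_general ε hε lam f hf hper heig hnc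
end

section
/- Let ε > 0 and let f : [0,π] → ℂ solve -ε(sin θ f')' - f' = λ f on (0,π). Define f₊(t) = f(θ(t)) via the change of variables cos θ = tanh t, sin θ = sech t, t ∈ ℝ. Then f₊ satisfies -ε f₊''(t) + f₊'(t) = λ sech t · f₊(t) for all t ∈ ℝ. -/
/-!
The curve `θ(t) = arccos (tanh t)` is an integral curve of the vector field `-sin`:
`θ' = -sech t = -sin θ`. Along an integral curve `θ' = φ ∘ θ`, the chain rule gives
`(f ∘ θ)' = (φ f') ∘ θ` and `(f ∘ θ)'' = φ(θ) · (φ f')'(θ)`. With `φ = -sin` this turns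
`-ε f₊'' + f₊'` into `sin θ · (-ε (sin f')' - f')(θ) = sech t · λ f(θ)`.
-/

open Real

namespace Real

theorem hasDerivAt_tanh (x : ℝ) : HasDerivAt tanh (1 - tanh x ^ 2) x := by
  have hcosh := (cosh_pos x).ne'
  have h := (hasDerivAt_sinh x).div (hasDerivAt_cosh x) hcosh
  rw [show sinh / cosh = tanh from funext fun y => (tanh_eq_sinh_div_cosh y).symm] at h
  refine h.congr_deriv ?_
  rw [tanh_eq_sinh_div_cosh]
  field_simp

theorem sin_arccos_tanh (x : ℝ) : sin (arccos (tanh x)) = 1 / cosh x := by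
  have hcosh := (cosh_pos x).ne'
  have h : 1 - tanh x ^ 2 = (1 / cosh x) ^ 2 := by
    rw [tanh_eq_sinh_div_cosh]
    field_simp
    linear_combination cosh_sq_sub_sinh_sq x
  rw [sin_arccos, h, sqrt_sq (by positivity)]

theorem arccos_tanh_mem_Ioo (x : ℝ) : arccos (tanh x) ∈ Set.Ioo 0 π :=
  ⟨arccos_pos.mpr (tanh_lt_one x), arccos_lt_pi.mpr (neg_one_lt_tanh x)⟩

theorem hasDerivAt_arccos_tanh (x : ℝ) :
    HasDerivAt (fun s => arccos (tanh s)) (-sin (arccos (tanh x))) x := by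
  have hpos : 0 < 1 - tanh x ^ 2 := by linarith [tanh_sq_lt_one x]
  refine ((hasDerivAt_arccos (neg_one_lt_tanh x).ne' (tanh_lt_one x).ne).comp x
    (hasDerivAt_tanh x)).congr_deriv ?_
  rw [sin_arccos]
  have hsqrt := sqrt_pos.mpr hpos
  field_simp
  rw [sq_sqrt hpos.le]

end Real

section IntegralCurve

variable {E : Type*} [NormedAddCommGroup E] [NormedSpace ℝ E] {φ θ : ℝ → ℝ} {f : ℝ → E}

theorem deriv_comp_integralCurve (hθ : ∀ t, HasDerivAt θ (φ (θ t)) t)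
    (hf : Differentiable ℝ f) :
    deriv (fun t => f (θ t)) = fun t => φ (θ t) • deriv f (θ t) :=
  funext fun t => ((hf (θ t)).hasDerivAt.scomp t (hθ t)).deriv

theorem deriv_deriv_comp_integralCurve (hθ : ∀ t, HasDerivAt θ (φ (θ t)) t)
    (hf : Differentiable ℝ f) {t : ℝ}
    (hφf : DifferentiableAt ℝ (fun x => φ x • deriv f x) (θ t)) :
    deriv (deriv (fun t => f (θ t))) t
      = φ (θ t) • deriv (fun x => φ x • deriv f x) (θ t) := by
  rw [deriv_comp_integralCurve hθ hf]
  exact (hφf.hasDerivAt.scomp t (hθ t)).deriv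

end IntegralCurve

theorem change_of_variables_to_line_general (ε : ℝ) (lam : ℂ) (f : ℝ → ℂ)
    (hf : ContDiff ℝ 2 f)
    (heig : ∀ θ ∈ Set.Ioo 0 π,
      -(ε : ℂ) * deriv (fun t => (Real.sin t : ℂ) * deriv f t) θ - deriv f θ
        = lam * f θ) :
    ∀ t : ℝ,
      -(ε : ℂ) * deriv (deriv (fun s => f (Real.arccos (Real.tanh s)))) t
        + deriv (fun s => f (Real.arccos (Real.tanh s))) t
        = lam * ((1 / Real.cosh t : ℝ) : ℂ) * f (Real.arccos (Real.tanh t)) := by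
  intro t
  set sinMulDeriv : ℝ → ℂ := fun x => (Real.sin x : ℂ) * deriv f x
  have hflow : (fun x => (-Real.sin x) • deriv f x) = -sinMulDeriv := by
    funext x
    simp [sinMulDeriv, Complex.real_smul]
  have hf' : Differentiable ℝ f := hf.differentiable (by norm_num)
  have hsinMulDeriv : Differentiable ℝ sinMulDeriv := by
    have := hf.differentiable_deriv_two
    fun_prop
  rw [deriv_deriv_comp_integralCurve (φ := fun x => -Real.sin x) hasDerivAt_arccos_tanh hf'
      (hflow ▸ hsinMulDeriv.neg _),
    deriv_comp_integralCurve (φ := fun x => -Real.sin x) hasDerivAt_arccos_tanh hf',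
    hflow, deriv.neg, ← sin_arccos_tanh]
  simp only [Complex.real_smul, Complex.ofReal_neg]
  linear_combination (Real.sin (arccos (tanh t)) : ℂ) * heig _ (arccos_tanh_mem_Ioo t)

/-- Under the change of variables `cos θ = tanh t`, `sin θ = sech t`
(i.e. `θ(t) = arccos (tanh t)`), a solution of `-ε(sin θ f')' - f' = λ f`
on `(0,π)` transforms into a solution `f₊(t) = f(θ(t))` of
`-ε f₊'' + f₊' = λ sech t · f₊` on `ℝ`. -/
theorem change_of_variables_to_line (ε : ℝ) (hε : 0 < ε) (lam : ℂ) (f : ℝ → ℂ)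
    (hf : ContDiff ℝ 2 f)
    (heig : ∀ θ ∈ Set.Ioo 0 π,
      -(ε : ℂ) * deriv (fun t => (Real.sin t : ℂ) * deriv f t) θ - deriv f θ
        = lam * f θ) :
    ∀ t : ℝ,
      -(ε : ℂ) * deriv (deriv (fun s => f (Real.arccos (Real.tanh s)))) t
        + deriv (fun s => f (Real.arccos (Real.tanh s))) t
        = lam * ((1 / Real.cosh t : ℝ) : ℂ) * f (Real.arccos (Real.tanh t)) :=
  change_of_variables_to_line_general ε lam f hf heig
end

section
/- Let ε ∈ ℝ and λ ∈ ℂ. Suppose f : [-π,π] → ℂ is C² periodic, satisfies -ε(sin θ f')' - f' = λ f, and satisfies the symmetry f(θ) = conj(f(-θ)) for all θ ∈ [-π,π]. Then ∫_{-π}^{π} sin θ |f'(θ)|² dθ = 0, and hence Re λ = 0 if f is not identically zero. -/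
/-!
Pair the eigenvalue equation with `conj f` and integrate over `[-π, π]`. Integrating by parts,
the weight `sin θ` kills the boundary terms and gives
`λ ∫ |f|² = ε ∫ sin θ |f'|² - ∫ f' conj f`. The symmetry `f θ = conj (f (-θ))` forces
`f' θ = -conj (f' (-θ))`, so `sin θ |f'(θ)|²` is odd and its integral vanishes, while
`Re ∫ f' conj f = (|f π|² - |f (-π)|²) / 2 = 0` by periodicity. Taking real parts,
`Re λ ∫ |f|² = 0`.
-/

open Real intervalIntegral
open scoped ComplexConjugate

theorem integral_eq_zero_of_odd_on {E : Type*} [NormedAddCommGroup E] [NormedSpace ℝ E]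
    {g : ℝ → E} {a : ℝ} (hg : ∀ x ∈ Set.uIcc (-a) a, g (-x) = -g x) :
    ∫ x in -a..a, g x = 0 := by
  have := IsAddTorsionFree.of_isTorsionFree ℝ E
  refine self_eq_neg.mp ?_
  calc ∫ x in -a..a, g x = ∫ x in -a..a, g (-x) := by rw [integral_comp_neg, neg_neg]
    _ = ∫ x in -a..a, -g x := integral_congr hg
    _ = -∫ x in -a..a, g x := integral_neg

/-- Differentiating the symmetry within `s` suffices, so this also holds at the endpoints of a
closed interval. -/
theorem deriv_eq_neg_conj_deriv_neg {f : ℝ → ℂ} {s : Set ℝ} {x : ℝ}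
    (hsym : Set.EqOn f (fun t => conj (f (-t))) s) (hx : x ∈ s) (hs : UniqueDiffWithinAt ℝ s x)
    (hfx : DifferentiableAt ℝ f x) (hfx' : DifferentiableAt ℝ f (-x)) :
    deriv f x = -conj (deriv f (-x)) := by
  have hreflect : HasDerivAt (fun t => conj (f (-t))) (conj ((-1 : ℝ) • deriv f (-x))) x :=
    (hfx'.hasDerivAt.scomp x (hasDerivAt_neg x)).star
  refine (hs.eq_deriv s hfx.hasDerivAt.hasDerivWithinAt
    (hreflect.hasDerivWithinAt.congr hsym (hsym hx))).trans ?_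
  simp

theorem re_integral_deriv_mul_conj {f : ℝ → ℂ} (hf : ContDiff ℝ 1 f) (a b : ℝ) :
    (∫ x in a..b, deriv f x * conj (f x)).re = (‖f b‖ ^ 2 - ‖f a‖ ^ 2) / 2 := by
  have hdf (x : ℝ) : HasDerivAt f (deriv f x) x := (hf.differentiable one_ne_zero x).hasDerivAt
  have hf' := hf.continuous_deriv le_rfl
  have hf₀ := hf.continuous
  have hibp := integral_deriv_mul_eq_sub (a := a) (b := b) (v := fun t => conj (f t))
    (v' := fun t => conj (deriv f t)) (fun x _ => hdf x) (fun x _ => (hdf x).star)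
    (hf'.intervalIntegrable _ _) (Continuous.intervalIntegrable (by fun_prop) _ _)
  have hswap : ∫ x in a..b, f x * conj (deriv f x) =
      conj (∫ x in a..b, deriv f x * conj (f x)) := by
    rw [← intervalIntegral_conj]
    simp [mul_comm]
  rw [integral_add (f := fun x => deriv f x * conj (f x)) (g := fun x => f x * conj (deriv f x))
    (Continuous.intervalIntegrable (by fun_prop) _ _)
    (Continuous.intervalIntegrable (by fun_prop) _ _), hswap, Complex.add_conj,
    Complex.mul_conj', Complex.mul_conj'] at hibp
  norm_cast at hibp
  linarith

theorem integral_deriv_weight_mul_deriv_mul_conj {f : ℝ → ℂ} {w : ℝ → ℝ} {a b : ℝ}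
    (hf : ContDiff ℝ 2 f) (hw : ContDiff ℝ 1 w) (hwa : w a = 0) (hwb : w b = 0) :
    ∫ x in a..b, deriv (fun t => (w t : ℂ) * deriv f t) x * conj (f x) =
      -((∫ x in a..b, w x * ‖deriv f x‖ ^ 2 : ℝ) : ℂ) := by
  have hdf (x : ℝ) : HasDerivAt f (deriv f x) x :=
    (hf.differentiable two_ne_zero x).hasDerivAt
  have hf' : ContDiff ℝ 1 (deriv f) := hf.deriv'
  have hf'₀ := hf'.continuous
  have hf₀ := hf.continuous
  set u : ℝ → ℂ := fun t => (w t : ℂ) * deriv f t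
  have hu : ContDiff ℝ 1 u := (Complex.ofRealCLM.contDiff.comp hw).mul hf'
  have hu' := hu.continuous_deriv le_rfl
  have hu₀ := hu.continuous
  have hibp := integral_deriv_mul_eq_sub (a := a) (b := b) (v := fun t => conj (f t))
    (v' := fun t => conj (deriv f t))
    (fun x _ => (hu.differentiable one_ne_zero x).hasDerivAt) (fun x _ => (hdf x).star)
    (hu'.intervalIntegrable _ _) (Continuous.intervalIntegrable (by fun_prop) _ _)
  rw [integral_add (f := fun x => deriv u x * conj (f x)) (g := fun x => u x * conj (deriv f x))
    (Continuous.intervalIntegrable (by fun_prop) _ _)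
    (Continuous.intervalIntegrable (by fun_prop) _ _)] at hibp
  simp only [u, hwa, hwb, Complex.ofReal_zero, zero_mul, sub_zero] at hibp
  rw [eq_neg_of_add_eq_zero_left hibp, ← integral_ofReal]
  refine congrArg _ (integral_congr fun x _ => ?_)
  simp only [mul_assoc, Complex.mul_conj']
  push_cast
  ring

theorem mul_integral_norm_sq_eq_of_eigen {ε : ℝ} {lam : ℂ} {f : ℝ → ℂ} {w : ℝ → ℝ} {a b : ℝ}
    (hab : a ≤ b) (hf : ContDiff ℝ 2 f) (hw : ContDiff ℝ 1 w) (hwa : w a = 0) (hwb : w b = 0)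
    (heig : ∀ x ∈ Set.Icc a b,
      -(ε : ℂ) * deriv (fun t => (w t : ℂ) * deriv f t) x - deriv f x = lam * f x) :
    lam * ((∫ x in a..b, ‖f x‖ ^ 2 : ℝ) : ℂ) =
      ε * ((∫ x in a..b, w x * ‖deriv f x‖ ^ 2 : ℝ) : ℂ) -
        ∫ x in a..b, deriv f x * conj (f x) := by
  have hf' : ContDiff ℝ 1 (deriv f) := hf.deriv'
  have hf'₀ := hf'.continuous
  have hf₀ := hf.continuous
  have hu' : Continuous (deriv fun t => (w t : ℂ) * deriv f t) :=
    ((Complex.ofRealCLM.contDiff.comp hw).mul hf').continuous_deriv le_rfl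
  calc lam * ((∫ x in a..b, ‖f x‖ ^ 2 : ℝ) : ℂ)
      = ∫ x in a..b, lam * f x * conj (f x) := by
        rw [← integral_ofReal, ← integral_const_mul]
        simp only [mul_assoc, Complex.mul_conj', Complex.ofReal_pow]
    _ = ∫ x in a..b, (-(ε : ℂ) * deriv (fun t => (w t : ℂ) * deriv f t) x - deriv f x) *
          conj (f x) :=
        integral_congr fun x hx => by rw [heig x (Set.uIcc_of_le hab ▸ hx)]
    _ = -ε * (∫ x in a..b, deriv (fun t => (w t : ℂ) * deriv f t) x * conj (f x)) -
          ∫ x in a..b, deriv f x * conj (f x) := by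
        simp only [sub_mul, mul_assoc]
        rw [integral_sub
          (f := fun x => -(ε : ℂ) * (deriv (fun t => (w t : ℂ) * deriv f t) x * conj (f x)))
          (g := fun x => deriv f x * conj (f x))
          (Continuous.intervalIntegrable (by fun_prop) _ _)
          (Continuous.intervalIntegrable (by fun_prop) _ _), integral_const_mul]
    _ = _ := by rw [integral_deriv_weight_mul_deriv_mul_conj hf hw hwa hwb]; ring

theorem symmetry_implies_purely_imaginary_general (ε : ℝ) (lam : ℂ) (f : ℝ → ℂ)
    (hf : ContDiff ℝ 2 f)
    (hper : f (-π) = f π)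
    (heig : ∀ θ ∈ Set.Icc (-π) π,
      -(ε : ℂ) * deriv (fun t => (Real.sin t : ℂ) * deriv f t) θ - deriv f θ
        = lam * f θ)
    (hsym : ∀ θ ∈ Set.Icc (-π) π, f θ = (starRingEnd ℂ) (f (-θ))) :
    (∫ θ in (-π)..π, Real.sin θ * ‖deriv f θ‖ ^ 2) = 0
    ∧ ((∃ θ ∈ Set.Icc (-π) π, f θ ≠ 0) → lam.re = 0) := by
  have hπ : -π < π := by linarith [pi_pos]
  have hdf : Differentiable ℝ f := hf.differentiable two_ne_zero
  have hsin : ∫ θ in (-π)..π, sin θ * ‖deriv f θ‖ ^ 2 = 0 := by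
    refine integral_eq_zero_of_odd_on fun θ hθ => ?_
    rw [Set.uIcc_of_le hπ.le] at hθ
    rw [sin_neg, deriv_eq_neg_conj_deriv_neg hsym hθ (uniqueDiffOn_Icc hπ θ hθ) (hdf θ) (hdf (-θ))]
    simp
  refine ⟨hsin, fun ⟨θ₀, hθ₀, hfθ₀⟩ => ?_⟩
  have hmass : 0 < ∫ θ in (-π)..π, ‖f θ‖ ^ 2 :=
    integral_pos hπ (hdf.continuous.norm.pow 2).continuousOn (fun _ _ => by positivity)
      ⟨θ₀, hθ₀, by positivity⟩
  have hdrift : (∫ θ in (-π)..π, deriv f θ * conj (f θ)).re = 0 := by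
    rw [re_integral_deriv_mul_conj (hf.of_le one_le_two), hper, sub_self, zero_div]
  have hre := congrArg Complex.re
    (mul_integral_norm_sq_eq_of_eigen hπ.le hf contDiff_sin (by simp) sin_pi heig)
  simp only [hsin, hdrift, Complex.ofReal_zero, mul_zero, Complex.sub_re, Complex.zero_re,
    sub_zero, Complex.mul_re, Complex.ofReal_re, Complex.ofReal_im] at hre
  exact (mul_eq_zero.mp hre).resolve_right hmass.ne'

/-- If a `C²` periodic eigenfunction `f` of `-ε(sin θ f')' - f' = λ f` has the
symmetry `f(θ) = conj(f(-θ))`, then `∫ sin θ |f'|² dθ = 0`, and `Re λ = 0`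
provided `f` is not identically zero. -/
theorem symmetry_implies_purely_imaginary (ε : ℝ) (lam : ℂ) (f : ℝ → ℂ)
    (hf : ContDiff ℝ 2 f)
    (hper : f (-π) = f π) (hper' : deriv f (-π) = deriv f π)
    (heig : ∀ θ ∈ Set.Icc (-π) π,
      -(ε : ℂ) * deriv (fun t => (Real.sin t : ℂ) * deriv f t) θ - deriv f θ
        = lam * f θ)
    (hsym : ∀ θ ∈ Set.Icc (-π) π, f θ = (starRingEnd ℂ) (f (-θ))) :
    (∫ θ in (-π)..π, Real.sin θ * ‖deriv f θ‖ ^ 2) = 0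
    ∧ ((∃ θ ∈ Set.Icc (-π) π, f θ ≠ 0) → lam.re = 0) :=
  symmetry_implies_purely_imaginary_general ε lam f hf hper heig hsym
end
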